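/- arXiv:1409.1777 — 4 statements merged into one kernel-verified Lean document; each statement's English description precedes it below -/
import Mathlib

section
/- For every fixed $n \in \mathbb{N}$, the logarithmic integral satisfies $\mathrm{li}(x) = \sum_{j=1}^{n} \frac{(j-1)!\, x}{\log^j x} + O\left( \frac{x}{\log^{n+1} x} \right)$ as $x \to \infty$. -/
/-!
Subtracting the singular part `1 / (t - 1)` from `1 / log t` leaves a function with values in
`[0, 1]` on `[0, ∞)`, while the two one-sided integrals of `1 / (t - 1)` around `t = 1` cancel
exactly (`log ε - log ε`). Hence the principal value exists and, for `x ≥ 2`,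
`li x = C + ∫₂ˣ dt / log t`. Integrating by parts `n` times,
`∫₂ˣ dt / log t = ∑_{j=1}^n (j-1)! x / log^j x + n! ∫₂ˣ dt / log^{n+1} t + O(1)`, and
`∫₂ˣ dt / log^m t = O(x / log^m x)` because, once `log t ≥ 2m`, the integrand is at most twice the
derivative `1 / log^m t - m / log^{m+1} t` of `t / log^m t`.
-/

open Filter Real

/-- The logarithmic integral `li x = ∫ 0^x dt / log t`, understood as the Cauchy
principal value `lim_{ε → 0⁺} (∫_0^{1-ε} dt/log t + ∫_{1+ε}^x dt/log t)`. -/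
noncomputable def li (x : ℝ) : ℝ :=
  limUnder (nhdsWithin (0 : ℝ) (Set.Ioi 0)) fun ε : ℝ =>
    (∫ t in (0 : ℝ)..(1 - ε), 1 / Real.log t) + ∫ t in (1 + ε)..x, 1 / Real.log t

open MeasureTheory Set Asymptotics Topology

theorem one_div_log_sub_one_div_sub_one_mem_Icc {t : ℝ} (ht : 0 ≤ t) :
    1 / log t - 1 / (t - 1) ∈ Icc (0 : ℝ) 1 := by
  rcases ht.eq_or_lt with rfl | ht0
  · norm_num
  rcases eq_or_ne t 1 with rfl | ht1
  · norm_num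
  have hpos : 0 < log t * (t - 1) := by
    rcases ht1.lt_or_gt with h | h
    · exact mul_pos_of_neg_of_neg (log_neg ht0 h) (by linarith)
    · exact mul_pos (log_pos h) (by linarith)
  have hL : log t ≠ 0 := by rintro h; simp [h] at hpos
  have hu : t - 1 ≠ 0 := sub_ne_zero.2 ht1
  have hupper : log t ≤ t - 1 := log_le_sub_one_of_pos ht0
  have hlower : 1 - t⁻¹ ≤ log t := one_sub_inv_le_log_of_pos ht0
  -- The difference is `(t - 1 - log t) / (log t * (t - 1))`; its upper bound is `hlower` times `t`.
  rw [div_sub_div _ _ hL hu, mem_Icc, le_div_iff₀ hpos, div_le_one hpos]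
  refine ⟨by linarith, ?_⟩
  have := mul_le_mul_of_nonneg_left hlower ht0.le
  rw [mul_sub, mul_inv_cancel₀ ht0.ne'] at this
  nlinarith

theorem integrableOn_one_div_log_sub_one_div_sub_one (b : ℝ) :
    IntegrableOn (fun t => 1 / log t - 1 / (t - 1)) (Icc 0 b) := by
  refine Measure.integrableOn_of_bounded (M := 1) measure_Icc_lt_top.ne (by fun_prop) ?_
  refine (ae_restrict_iff' measurableSet_Icc).2 (Eventually.of_forall fun t ht => ?_)
  have := one_div_log_sub_one_div_sub_one_mem_Icc ht.1
  rw [Real.norm_eq_abs, abs_le]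
  exact ⟨by linarith [this.1], this.2⟩

theorem intervalIntegrable_one_div_sub_one {a b : ℝ} (h : (1 : ℝ) ∉ uIcc a b) :
    IntervalIntegrable (fun t => 1 / (t - 1)) volume a b :=
  intervalIntegral.intervalIntegrable_one_div (fun t ht => sub_ne_zero.2 fun h1 => h (h1 ▸ ht))
    (by fun_prop)

theorem integral_one_div_sub_add_integral_one_div_sub (c : ℝ) {ε r : ℝ} (hε : 0 < ε)
    (hr : 0 < r) :
    (∫ t in (c - r)..(c - ε), 1 / (t - c)) + ∫ t in (c + ε)..(c + r), 1 / (t - c) = 0 := by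
  rw [intervalIntegral.integral_comp_sub_right (fun t => 1 / t),
    intervalIntegral.integral_comp_sub_right (fun t => 1 / t), integral_one_div, integral_one_div]
  · rw [show (c - ε - c) / (c - r - c) = ε / r by ring,
      show (c + r - c) / (c + ε - c) = r / ε by ring, log_div hε.ne' hr.ne', log_div hr.ne' hε.ne']
    ring
  all_goals rw [mem_uIcc]; rintro (⟨h1, h2⟩ | ⟨h1, h2⟩) <;> linarith

theorem tendsto_integral_add_integral_of_mem_Ioo {g : ℝ → ℝ} {a b c : ℝ}
    (hg : IntegrableOn g (Icc a b)) (hc : c ∈ Ioo a b) :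
    Tendsto (fun ε => (∫ t in a..(c - ε), g t) + ∫ t in (c + ε)..b, g t) (𝓝 0)
      (𝓝 (∫ t in a..b, g t)) := by
  have hab : a ≤ b := (hc.1.trans hc.2).le
  rw [← uIcc_of_le hab] at hg
  have hnhds : uIcc a b ∈ 𝓝 c := by rw [uIcc_of_le hab]; exact Icc_mem_nhds hc.1 hc.2
  have hleft := ((intervalIntegral.continuousOn_primitive_interval hg).continuousAt hnhds).tendsto
  have hright :=
    ((intervalIntegral.continuousOn_primitive_interval_left hg).continuousAt hnhds).tendsto
  rw [← intervalIntegral.integral_add_adjacent_intervals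
    (hg.mono_set (uIcc_subset_uIcc_left (mem_uIcc_of_le hc.1.le hc.2.le))).intervalIntegrable
    (hg.mono_set (uIcc_subset_uIcc_right (mem_uIcc_of_le hc.1.le hc.2.le))).intervalIntegrable]
  refine (hleft.comp ?_).add (hright.comp ?_)
  · exact (continuous_sub_left c).tendsto' 0 c (sub_zero c)
  · exact (continuous_const_add c).tendsto' 0 c (add_zero c)

theorem intervalIntegrable_one_div_log_pow (m : ℕ) {a b : ℝ} (ha : 1 < a) (hb : 1 < b) :
    IntervalIntegrable (fun t => 1 / log t ^ m) volume a b := by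
  refine ContinuousOn.intervalIntegrable fun t ht => ?_
  have ht1 : 1 < t := (lt_min ha hb).trans_le ht.1
  exact (continuousAt_const.div ((continuousAt_log (by positivity)).pow m)
    (pow_ne_zero m (log_pos ht1).ne')).continuousWithinAt

theorem li_eq_integral_add_integral {x : ℝ} (hx : 2 ≤ x) :
    li x = (∫ t in (0 : ℝ)..2, 1 / log t - 1 / (t - 1)) + ∫ t in (2 : ℝ)..x, 1 / log t := by
  refine Tendsto.limUnder_eq (Tendsto.congr' ?_ (((tendsto_integral_add_integral_of_mem_Ioo
    (integrableOn_one_div_log_sub_one_div_sub_one 2) ⟨zero_lt_one, one_lt_two⟩).add_const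
    (∫ t in (2 : ℝ)..x, 1 / log t)).mono_left nhdsWithin_le_nhds))
  filter_upwards [Ioo_mem_nhdsGT zero_lt_one] with ε ⟨hε0, hε1⟩
  have hg : ∀ {u v : ℝ}, u ∈ Icc (0 : ℝ) 2 → v ∈ Icc (0 : ℝ) 2 →
      IntervalIntegrable (fun t => 1 / log t - 1 / (t - 1)) volume u v := fun hu hv =>
    ((integrableOn_one_div_log_sub_one_div_sub_one 2).mono_set
      (uIcc_subset_Icc hu hv)).intervalIntegrable
  have hsplit : ∀ {u v : ℝ}, u ∈ Icc (0 : ℝ) 2 → v ∈ Icc (0 : ℝ) 2 → (1 : ℝ) ∉ uIcc u v →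
      ∫ t in u..v, 1 / log t =
        (∫ t in u..v, 1 / log t - 1 / (t - 1)) + ∫ t in u..v, 1 / (t - 1) := fun hu hv h1 => by
    rw [← intervalIntegral.integral_add (hg hu hv) (intervalIntegrable_one_div_sub_one h1)]
    simp only [sub_add_cancel]
  have hpv := integral_one_div_sub_add_integral_one_div_sub 1 hε0 one_pos
  norm_num only at hpv
  have hlog : ∀ {u v : ℝ}, 1 < u → 1 < v → IntervalIntegrable (fun t => 1 / log t) volume u v :=
    fun hu hv => by simpa using intervalIntegrable_one_div_log_pow 1 hu hv
  rw [← intervalIntegral.integral_add_adjacent_intervals (a := 1 + ε) (b := 2)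
      (hlog (by linarith) one_lt_two) (hlog one_lt_two (by linarith)),
    hsplit (u := 0) (v := 1 - ε) ⟨le_rfl, by linarith⟩ ⟨by linarith, by linarith⟩,
    hsplit (u := 1 + ε) (v := 2) ⟨by linarith, by linarith⟩ ⟨by linarith, le_rfl⟩]
  · linarith
  all_goals rw [mem_uIcc]; rintro (⟨h1, h2⟩ | ⟨h1, h2⟩) <;> linarith

theorem hasDerivAt_div_log_pow (m : ℕ) {t : ℝ} (ht : log t ≠ 0) :
    HasDerivAt (fun x => x / log x ^ m) (1 / log t ^ m - m / log t ^ (m + 1)) t := by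
  have ht0 : t ≠ 0 := by rintro rfl; simp at ht
  refine ((hasDerivAt_id' t).fun_div ((hasDerivAt_log ht0).fun_pow m)
    (pow_ne_zero m ht)).congr_deriv ?_
  rcases m with _ | m
  · simp
  · rw [Nat.add_sub_cancel]
    field_simp
    ring

theorem integral_one_div_log_pow (m : ℕ) {a b : ℝ} (ha : 1 < a) (hb : 1 < b) :
    ∫ t in a..b, 1 / log t ^ m =
      b / log b ^ m - a / log a ^ m + m * ∫ t in a..b, 1 / log t ^ (m + 1) := by
  have hderiv : ∀ t ∈ uIcc a b, HasDerivAt (fun x => x / log x ^ m)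
      (1 / log t ^ m - m / log t ^ (m + 1)) t := fun t ht =>
    hasDerivAt_div_log_pow m (log_pos ((lt_min ha hb).trans_le ht.1)).ne'
  have hm := intervalIntegrable_one_div_log_pow m ha hb
  have hm1 := (intervalIntegrable_one_div_log_pow (m + 1) ha hb).const_mul (m : ℝ)
  have := intervalIntegral.integral_eq_sub_of_hasDerivAt hderiv
    (by simpa only [mul_one_div] using hm.sub hm1)
  rw [← intervalIntegral.integral_const_mul]
  simp only [mul_one_div] at this hm1 ⊢
  rw [intervalIntegral.integral_sub hm hm1] at this
  linarith

noncomputable def liSeries (n : ℕ) (x : ℝ) : ℝ :=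
  ∑ j ∈ Finset.Icc 1 n, ((j - 1).factorial : ℝ) * x / log x ^ j

theorem integral_one_div_log_eq_liSeries (n : ℕ) {a b : ℝ} (ha : 1 < a) (hb : 1 < b) :
    ∫ t in a..b, 1 / log t =
      liSeries n b - liSeries n a + n.factorial * ∫ t in a..b, 1 / log t ^ (n + 1) := by
  induction n with
  | zero => simp [liSeries]
  | succ n ih =>
    rw [ih, integral_one_div_log_pow (n + 1) ha hb]
    simp only [liSeries, Finset.sum_Icc_succ_top (Nat.le_add_left 1 n), Nat.add_sub_cancel,
      Nat.factorial_succ]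
    push_cast
    ring

theorem integral_one_div_log_pow_le (m : ℕ) {T x : ℝ} (hT : 1 < T) (hmT : 2 * m ≤ log T)
    (hTx : T ≤ x) : ∫ t in T..x, 1 / log t ^ m ≤ 2 * (x / log x ^ m) := by
  have hT0 : 0 < log T := log_pos hT
  have hx : 1 < x := hT.trans_le hTx
  have hhalf : ∫ t in T..x, m * (1 / log t ^ (m + 1)) ≤ ∫ t in T..x, 1 / 2 * (1 / log t ^ m) := by
    refine intervalIntegral.integral_mono_on hTx
      ((intervalIntegrable_one_div_log_pow _ hT hx).const_mul _)
      ((intervalIntegrable_one_div_log_pow _ hT hx).const_mul _) fun t ht => ?_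
    have hlog : log T ≤ log t := log_le_log (by linarith) ht.1
    have hL : 0 < log t := hT0.trans_le hlog
    rw [pow_succ, ← mul_one_div, one_div_mul_one_div, mul_one_div, mul_one_div,
      div_le_div_iff₀ (by positivity) (by positivity)]
    nlinarith [pow_pos hL m]
  rw [intervalIntegral.integral_const_mul, intervalIntegral.integral_const_mul] at hhalf
  have := integral_one_div_log_pow m hT hx
  have hTm : 0 ≤ T / log T ^ m := by positivity
  linarith

theorem isBigO_const_div_log_pow (c : ℝ) (m : ℕ) :
    (fun _ : ℝ => c) =O[atTop] fun x => x / log x ^ m := by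
  refine (isBigO_const_one ℝ c atTop).trans (IsBigO.of_bound 1 ?_)
  filter_upwards [(isLittleO_pow_log_id_atTop (n := m)).bound one_pos, eventually_gt_atTop 1]
    with x hlog hx
  have hL : 0 < log x ^ m := pow_pos (log_pos hx) m
  rw [norm_one, one_mul, norm_of_nonneg (by positivity), one_le_div hL]
  simpa [abs_of_pos (log_pos hx), abs_of_pos (by linarith : 0 < x)] using hlog

theorem isBigO_integral_one_div_log_pow (m : ℕ) {a : ℝ} (ha : 1 < a) :
    (fun x => ∫ t in a..x, 1 / log t ^ m) =O[atTop] fun x => x / log x ^ m := by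
  set T := max a (exp (2 * m))
  have hT : 1 < T := ha.trans_le (le_max_left _ _)
  have hmT : 2 * m ≤ log T := by
    simpa using log_le_log (exp_pos _) (le_max_right a (exp (2 * m)))
  have htail : (fun x => ∫ t in T..x, 1 / log t ^ m) =O[atTop] fun x => x / log x ^ m := by
    refine IsBigO.of_bound 2 ?_
    filter_upwards [eventually_ge_atTop T] with x hx
    have hx1 : 1 < x := hT.trans_le hx
    have hnonneg : 0 ≤ ∫ t in T..x, 1 / log t ^ m :=
      intervalIntegral.integral_nonneg hx fun t ht =>
        by have := log_pos (hT.trans_le ht.1); positivity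
    rw [norm_of_nonneg hnonneg, norm_of_nonneg (by have := log_pos hx1; positivity)]
    exact integral_one_div_log_pow_le m hT hmT hx
  refine ((isBigO_const_div_log_pow (∫ t in a..T, 1 / log t ^ m) m).add htail).congr' ?_
    EventuallyEq.rfl
  filter_upwards [eventually_gt_atTop 1] with x hx
  exact intervalIntegral.integral_add_adjacent_intervals
    (intervalIntegrable_one_div_log_pow m ha hT) (intervalIntegrable_one_div_log_pow m hT hx)

theorem li_asymptotic_general (n : ℕ) :
    (fun x : ℝ =>
        li x - ∑ j ∈ Finset.Icc 1 n, (Nat.factorial (j - 1) : ℝ) * x / Real.log x ^ j)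
      =O[atTop] fun x : ℝ => x / Real.log x ^ (n + 1) := by
  have hremainder : (fun x => ((∫ t in (0 : ℝ)..2, 1 / log t - 1 / (t - 1)) - liSeries n 2) +
        n.factorial * ∫ t in (2 : ℝ)..x, 1 / log t ^ (n + 1)) =ᶠ[atTop]
      fun x => li x - liSeries n x := by
    filter_upwards [eventually_ge_atTop 2] with x hx
    rw [li_eq_integral_add_integral hx,
      integral_one_div_log_eq_liSeries n one_lt_two (one_lt_two.trans_le hx)]
    ring
  exact ((isBigO_const_div_log_pow _ _).add
    ((isBigO_integral_one_div_log_pow (n + 1) one_lt_two).const_mul_left _)).congr'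
      hremainder EventuallyEq.rfl

/-- For every fixed `n ≥ 1`,
`li x = ∑_{j=1}^n (j-1)! x / log^j x + O(x / log^{n+1} x)` as `x → ∞`. -/
theorem li_asymptotic (n : ℕ) (hn : 1 ≤ n) :
    (fun x : ℝ =>
        li x - ∑ j ∈ Finset.Icc 1 n, (Nat.factorial (j - 1) : ℝ) * x / Real.log x ^ j)
      =O[atTop] fun x : ℝ => x / Real.log x ^ (n + 1) :=
  li_asymptotic_general n
end

section
/- Let $m \in \mathbb{N}$ and suppose the rational numbers $a_{is}$ ($0 \leq i \leq s \leq m$, $a_{ss} = 1$) satisfy the prime asymptotic hypothesis (210). Then for every $n \in \mathbb{N}$, $\sum_{k \leq n} p_k = \frac{n^2}{2} \left( g(n) - h_m(n) + \sum_{s=1}^{m} \frac{(-1)^{s+1}}{s\log^s n} \sum_{i=0}^s a_{is} \sum_{j=0}^{m-s} \sum_{r=0}^{\min\{i,j\}} \frac{b_{s,i,j,r}(\log \log n)^{i-r}}{2^j\log^j n} \right) + O(n\, c_m(n))$ as $n \to \infty$. -/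
open Filter Real

/-- `nthPrime k` is the `k`-th prime number `p_k` (so `p_1 = 2`, `p_2 = 3`, ...). -/
noncomputable def nthPrime (k : ℕ) : ℕ := Nat.nth Nat.Prime (k - 1)

/-- `c_m(x) = x (log log x)^{m+1} / log^{m+1} x`. -/
noncomputable def cAux (m : ℕ) (x : ℝ) : ℝ :=
  x * Real.log (Real.log x) ^ (m + 1) / Real.log x ^ (m + 1)

/-- The prime asymptotic hypothesis (210): with coefficients `a i s ∈ ℚ`,
`p_n = n (log n + log log n - 1 + ∑_{s=1}^m ((-1)^{s+1} / (s log^s n)) ∑_{i=0}^s a_{is} (log log n)^i)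
  + O(c_m(n))` as `n → ∞`. -/
def PrimeHyp (m : ℕ) (a : ℕ → ℕ → ℚ) : Prop :=
  (fun n : ℕ =>
      (nthPrime n : ℝ) -
        (n : ℝ) *
          (Real.log n + Real.log (Real.log n) - 1 +
            ∑ s ∈ Finset.Icc 1 m, (-1) ^ (s + 1) / ((s : ℝ) * Real.log n ^ s) *
              ∑ i ∈ Finset.range (s + 1), (a i s : ℝ) * Real.log (Real.log n) ^ i))
    =O[atTop] fun n : ℕ => cAux m n

/-- `g(x) = log x + log log x - 3/2`. -/
noncomputable def gAux (x : ℝ) : ℝ := Real.log x + Real.log (Real.log x) - 3 / 2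

/-- `h_m(x) = ∑_{j=1}^m (j-1)! / (2^j log^j x)`. -/
noncomputable def hAux (m : ℕ) (x : ℝ) : ℝ :=
  ∑ j ∈ Finset.Icc 1 m, (Nat.factorial (j - 1) : ℝ) / (2 ^ j * Real.log x ^ j)

/-- The recurrence defining the integers `b s i j r` (for `r ≤ j`):
`b s i 0 0 = 1`; for `j ≥ 1`, `b s i j j = b s i (j-1) (j-1) * (-(i-(j-1)))`;
for `j ≥ 1`, `b s i j 0 = b s i (j-1) 0 * (s+j-1)`; and for `j > r ≥ 1`,
`b s i j r = b s i (j-1) r * (s+j-1) + b s i (j-1) (r-1) * (-(i-(r-1)))`. -/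
def BRec (b : ℕ → ℕ → ℕ → ℕ → ℤ) : Prop :=
  (∀ s i : ℕ, b s i 0 0 = 1) ∧
  (∀ s i j : ℕ, 1 ≤ j →
    b s i j j = b s i (j - 1) (j - 1) * (-((i : ℤ) - ((j : ℤ) - 1)))) ∧
  (∀ s i j : ℕ, 1 ≤ j →
    b s i j 0 = b s i (j - 1) 0 * ((s : ℤ) + (j : ℤ) - 1)) ∧
  (∀ s i j r : ℕ, 1 ≤ r → r < j →
    b s i j r = b s i (j - 1) r * ((s : ℤ) + (j : ℤ) - 1)
      + b s i (j - 1) (r - 1) * (-((i : ℤ) - ((r : ℤ) - 1))))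


/-
Put `T(x) = x²/2 · H(x)`, where `H` is the bracket of the claim, and let `x G(x)` be the main term
of (210). Every block of `H` (the terms of `h_m`, and for each `(s, i)` the terms with `j = 0, …,
m - s`) has the form `∑_j P_j(log log x) / (2^j log^{k+j} x)`, and the recursion defining `b` is
exactly `P_{j+1} = (k + j) P_j - P_j'`. Then `(1 + (x/2) d/dx)` telescopes each block, which gives
`T'(x) = x G(x) + O(c_m(x))`. By the mean value theorem, together with `(x G(x))' = O(log x)` and
the fact that `c_m` is increasing up to a constant factor, `T(k) - T(k-1) = k G(k) + O(c_m(k))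
= p_k + O(c_m(k))`; summing over `k ≤ n` telescopes to `∑ p_k - T(n) = O(n c_m(n))`.
-/

namespace SumPrimes

open Polynomial Finset Asymptotics

theorem abs_sub_le_of_abs_deriv_le {f f' : ℝ → ℝ} {x M : ℝ}
    (hf : ∀ t ∈ Set.Icc (x - 1) x, HasDerivAt f (f' t) t)
    (hM : ∀ t ∈ Set.Icc (x - 1) x, |f' t| ≤ M) {t : ℝ} (ht : t ∈ Set.Icc (x - 1) x) :
    |f x - f t| ≤ M := by
  have hx : x ∈ Set.Icc (x - 1) x := ⟨by linarith, le_rfl⟩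
  have hM₀ : 0 ≤ M := (abs_nonneg _).trans (hM x hx)
  have h := (convex_Icc _ _).norm_image_sub_le_of_norm_hasDerivWithin_le
    (fun u hu => (hf u hu).hasDerivWithinAt) hM ht hx
  rw [Real.norm_eq_abs, Real.norm_eq_abs, abs_of_nonneg (sub_nonneg.mpr ht.2)] at h
  exact h.trans (mul_le_of_le_one_right hM₀ (by linarith [ht.1]))

theorem isBigO_sub_sub_of_hasDerivAt {T F e F' c : ℝ → ℝ} {C : ℝ}
    (hT : ∀ᶠ t in atTop, HasDerivAt T (F t + e t) t) (hF : ∀ᶠ t in atTop, HasDerivAt F (F' t) t)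
    (he : e =O[atTop] c) (hF' : F' =O[atTop] c) (hc₀ : ∀ᶠ x in atTop, 0 ≤ c x)
    (hc : ∀ᶠ x in atTop, ∀ y, x ≤ y → c x ≤ C * c y) :
    (fun k : ℕ => T k - T (k - 1) - F k) =O[atTop] fun k : ℕ => c k := by
  obtain ⟨K₁, hK₁, he⟩ := he.exists_nonneg
  obtain ⟨K₂, hK₂, hF'⟩ := hF'.exists_nonneg
  obtain ⟨X, hX⟩ := eventually_atTop.mp
    (hT.and (hF.and (he.bound.and (hF'.bound.and (hc₀.and hc)))))
  refine IsBigO.of_bound ((K₁ + K₂) * C) ?_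
  filter_upwards [tendsto_natCast_atTop_atTop.eventually (eventually_ge_atTop (X + 1))] with k hk
  have hX' : ∀ t ∈ Set.Icc ((k : ℝ) - 1) k, X ≤ t := fun t ht => by linarith [ht.1]
  have hc_le : ∀ t ∈ Set.Icc ((k : ℝ) - 1) k, ‖c t‖ ≤ C * c k := fun t ht => by
    obtain ⟨-, -, -, -, hct, hmono⟩ := hX t (hX' t ht)
    rw [Real.norm_of_nonneg hct]
    exact hmono k ht.2
  have hF_sub : ∀ t ∈ Set.Icc ((k : ℝ) - 1) k, |F k - F t| ≤ K₂ * (C * c k) :=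
    fun t => abs_sub_le_of_abs_deriv_le (fun u hu => (hX u (hX' u hu)).2.1) fun u hu =>
      (hX u (hX' u hu)).2.2.2.1.trans (by gcongr; exact hc_le u hu)
  have hderiv_sub : ∀ u ∈ Set.Icc ((k : ℝ) - 1) k,
      |F u + e u - F k| ≤ (K₁ + K₂) * (C * c k) := fun u hu =>
    calc |F u + e u - F k| = |e u - (F k - F u)| := by ring_nf
      _ ≤ |e u| + |F k - F u| := abs_sub _ _
      _ ≤ K₁ * (C * c k) + K₂ * (C * c k) := add_le_add
          ((hX u (hX' u hu)).2.2.1.trans (by gcongr; exact hc_le u hu)) (hF_sub u hu)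
      _ = (K₁ + K₂) * (C * c k) := by ring
  have hstep := abs_sub_le_of_abs_deriv_le (f := fun t => T t - t * F k)
    (fun u hu => (hX u (hX' u hu)).1.sub (hasDerivAt_mul_const (F k))) hderiv_sub
    (t := (k : ℝ) - 1) ⟨le_rfl, by linarith⟩
  rw [Real.norm_eq_abs, Real.norm_of_nonneg (hX k (by linarith)).2.2.2.2.1, mul_assoc]
  convert hstep using 2
  ring

theorem isBigO_sum_Icc {d : ℕ → ℝ} {c : ℝ → ℝ} {C : ℝ} (hd : d =O[atTop] fun k => c k)
    (hc₁ : ∀ᶠ x in atTop, 1 ≤ c x) (hc : ∀ᶠ x in atTop, ∀ y, x ≤ y → c x ≤ C * c y) :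
    (fun n : ℕ => ∑ k ∈ Icc 1 n, d k) =O[atTop] fun n : ℕ => (n : ℝ) * c n := by
  obtain ⟨K, hK, hd⟩ := hd.exists_nonneg
  obtain ⟨N, hN⟩ := eventually_atTop.mp
    (hd.bound.and (tendsto_natCast_atTop_atTop.eventually (hc₁.and hc)))
  set A := ∑ k ∈ range N, |d k|
  refine IsBigO.of_bound (A + K * C) ?_
  filter_upwards [eventually_ge_atTop N] with n hn
  have hcn : 1 ≤ c n := (hN n hn).2.1
  have hCcn : 0 ≤ C * c n := zero_le_one.trans ((hN N le_rfl).2.1.trans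
    ((hN N le_rfl).2.2 n (Nat.cast_le.mpr hn)))
  have hA : 0 ≤ A := sum_nonneg fun k _ => abs_nonneg _
  have hterm : ∀ k ∈ Icc 1 n, |d k| ≤ A + K * (C * c n) := fun k hk => by
    rcases lt_or_ge k N with hkN | hkN
    · exact (single_le_sum (fun j _ => abs_nonneg (d j)) (mem_range.mpr hkN)).trans
        (le_add_of_nonneg_right (by positivity))
    · obtain ⟨hdk, hck, hmono⟩ := hN k hkN
      rw [Real.norm_eq_abs, Real.norm_of_nonneg (zero_le_one.trans hck)] at hdk
      exact le_add_of_nonneg_of_le hA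
        (hdk.trans (by gcongr; exact hmono n (Nat.cast_le.mpr (mem_Icc.mp hk).2)))
  rw [Real.norm_eq_abs, Real.norm_of_nonneg (by positivity)]
  calc |∑ k ∈ Icc 1 n, d k| ≤ ∑ k ∈ Icc 1 n, |d k| := abs_sum_le_sum_abs _ _
    _ ≤ n * (A + K * (C * c n)) := by
        simpa [mul_add] using sum_le_sum hterm
    _ ≤ (A + K * C) * (n * c n) := by
        nlinarith [mul_le_mul_of_nonneg_left hcn hA, (n.cast_nonneg : (0 : ℝ) ≤ n)]

theorem sum_Icc_sub_eq (f : ℝ → ℝ) (n : ℕ) :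
    ∑ k ∈ Icc 1 n, (f k - f (k - 1)) = f n - f 0 := by
  induction n with
  | zero => simp
  | succ n ih =>
    rw [sum_Icc_succ_top (by omega), ih, Nat.cast_succ, add_sub_cancel_right]
    ring

theorem hasDerivAt_half_sq_mul {f : ℝ → ℝ} {f' x : ℝ} (hf : HasDerivAt f f' x) :
    HasDerivAt (fun t => t ^ 2 / 2 * f t) (x * (f x + x / 2 * f')) x := by
  refine ((((hasDerivAt_id x).pow 2).div_const 2).mul hf).congr_deriv ?_
  simp only [Pi.pow_apply, id_eq]
  ring

theorem hasDerivAt_half_sq_mul_sum {ι : Type*} (u : Finset ι) (c : ι → ℝ) {f : ι → ℝ → ℝ}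
    {g : ι → ℝ} {x : ℝ} (h : ∀ i ∈ u, HasDerivAt (fun t => t ^ 2 / 2 * f i t) (x * g i) x) :
    HasDerivAt (fun t => t ^ 2 / 2 * ∑ i ∈ u, c i * f i t) (x * ∑ i ∈ u, c i * g i) x := by
  have hs := HasDerivAt.fun_sum fun i hi => (h i hi).const_mul (c i)
  simp only [mul_left_comm (c _), ← Finset.mul_sum] at hs
  exact hs

noncomputable def logTerm (P : ℝ[X]) (k : ℕ) (x : ℝ) : ℝ := P.eval (log (log x)) / log x ^ k

theorem hasDerivAt_logTerm (P : ℝ[X]) (k : ℕ) {x : ℝ} (hx : log x ≠ 0) :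
    HasDerivAt (logTerm P k) (-logTerm (C (k : ℝ) * P - derivative P) (k + 1) x / x) x := by
  have hx0 : x ≠ 0 := ne_of_apply_ne log (by rwa [log_zero])
  have hY : HasDerivAt (fun t => P.eval (log (log t)))
      (P.derivative.eval (log (log x)) * ((log x)⁻¹ * x⁻¹)) x :=
    (P.hasDerivAt _).comp x ((hasDerivAt_log hx).comp x (hasDerivAt_log hx0))
  have hL : HasDerivAt (fun t => log t ^ k) (k * log x ^ (k - 1) * x⁻¹) x :=
    (hasDerivAt_log hx0).pow k
  refine (hY.fun_div hL (pow_ne_zero k hx)).congr_deriv ?_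
  simp only [logTerm, eval_sub, eval_mul, eval_C]
  rcases k with _ | k
  · field_simp; ring
  · rw [Nat.add_sub_cancel]; push_cast; field_simp; ring

theorem isBigO_logTerm {P : ℝ[X]} {d : ℕ} (hP : P.natDegree ≤ d) (k : ℕ) :
    logTerm P k =O[atTop] fun x => log (log x) ^ d / log x ^ k := by
  have hPd : (fun y => P.eval y) =O[atTop] fun y => y ^ d := by
    simpa using isBigO_atTop_of_degree_le P (X ^ d)
      (by simpa using (degree_le_natDegree.trans (by exact_mod_cast hP)))
  refine ((hPd.comp_tendsto (tendsto_log_atTop.comp tendsto_log_atTop)).mul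
    (isBigO_refl (fun x => (log x ^ k)⁻¹) atTop)).congr (fun x => ?_) (fun x => ?_) <;>
  simp [logTerm, div_eq_mul_inv]

theorem isBigO_logTerm_one {P : ℝ[X]} {k : ℕ} (hP : P.natDegree ≤ k) :
    logTerm P k =O[atTop] fun _ => (1 : ℝ) := by
  refine (isBigO_logTerm hP k).trans (IsBigO.of_bound 1 ?_)
  filter_upwards [tendsto_log_atTop.eventually_ge_atTop 1,
    (tendsto_log_atTop.comp tendsto_log_atTop).eventually_ge_atTop 0] with x hL
    (hY : 0 ≤ log (log x))
  have hLk : 0 < log x ^ k := pow_pos (by linarith) k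
  rw [norm_one, one_mul, Real.norm_of_nonneg (div_nonneg (pow_nonneg hY k) hLk.le),
    div_le_one hLk]
  exact pow_le_pow_left₀ hY (log_le_self (by linarith)) k

noncomputable def logChain (P : ℕ → ℝ[X]) (s n : ℕ) (x : ℝ) : ℝ :=
  ∑ j ∈ range n, logTerm (P j) (s + j) x / 2 ^ j

-- Under this recursion `(1 + (x/2) d/dx)` maps the `j`-th term of the chain to itself minus the
-- `(j+1)`-st, so the chain telescopes to its first term minus the term after its last.
theorem hasDerivAt_half_sq_mul_logChain {P : ℕ → ℝ[X]} {s : ℕ}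
    (hP : ∀ j, P (j + 1) = C ((s + j : ℕ) : ℝ) * P j - derivative (P j)) (n : ℕ) {x : ℝ}
    (hx : log x ≠ 0) :
    HasDerivAt (fun t => t ^ 2 / 2 * logChain P s n t)
      (x * (logTerm (P 0) s x - logTerm (P n) (s + n) x / 2 ^ n)) x := by
  have hx0 : x ≠ 0 := ne_of_apply_ne log (by rwa [log_zero])
  have hd : HasDerivAt (logChain P s n)
      (∑ j ∈ range n, -logTerm (P (j + 1)) (s + j + 1) x / x / 2 ^ j) x := by
    simp only [hP]
    exact HasDerivAt.fun_sum fun j _ => (hasDerivAt_logTerm (P j) (s + j) hx).div_const _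
  refine (hasDerivAt_half_sq_mul hd).congr_deriv ?_
  have htel := sum_range_sub' (fun j => logTerm (P j) (s + j) x / 2 ^ j) n
  simp only [add_zero, pow_zero, div_one] at htel
  rw [logChain, ← htel, Finset.mul_sum, ← sum_add_distrib]
  refine congrArg _ (sum_congr rfl fun j _ => ?_)
  rw [← add_assoc]
  field_simp
  ring

section Coefficients

variable {b : ℕ → ℕ → ℕ → ℕ → ℤ}

noncomputable def bPoly (b : ℕ → ℕ → ℕ → ℕ → ℤ) (s i j : ℕ) : ℝ[X] :=
  ∑ r ∈ range (min i j + 1), C (b s i j r : ℝ) * X ^ (i - r)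

theorem natDegree_bPoly_le (s i j : ℕ) : (bPoly b s i j).natDegree ≤ i :=
  natDegree_sum_le_of_forall_le _ _ fun _ _ =>
    (natDegree_C_mul_X_pow_le _ _).trans (Nat.sub_le _ _)

theorem bPoly_zero (hb : BRec b) (s i : ℕ) : bPoly b s i 0 = X ^ i := by
  simp [bPoly, hb.1]

-- `BRec` says nothing about `b s i j r` for `r > j`; `bCoeff` sets those entries to `0`, so that
-- sums over `r` can run over all of `range (i + 1)`.
noncomputable def bCoeff (b : ℕ → ℕ → ℕ → ℕ → ℤ) (s i j r : ℕ) : ℝ :=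
  if r ≤ j then b s i j r else 0

theorem bPoly_eq_sum_bCoeff (s i j : ℕ) :
    bPoly b s i j = ∑ r ∈ range (i + 1), C (bCoeff b s i j r) * X ^ (i - r) := by
  have hfilter : (range (i + 1)).filter (· ≤ j) = range (min i j + 1) := by
    ext r; simp only [mem_filter, mem_range]; omega
  simp only [bCoeff, apply_ite C, map_zero, ite_mul, zero_mul, ← sum_filter, hfilter, bPoly]

theorem bCoeff_succ_zero (hb : BRec b) (s i j : ℕ) :
    bCoeff b s i (j + 1) 0 = ((s + j : ℕ) : ℝ) * bCoeff b s i j 0 := by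
  simp only [bCoeff, zero_le, if_true, hb.2.2.1 s i (j + 1) le_add_self, Nat.add_sub_cancel]
  push_cast
  ring

theorem bCoeff_succ_succ (hb : BRec b) (s i j r : ℕ) :
    bCoeff b s i (j + 1) (r + 1) =
      ((s + j : ℕ) : ℝ) * bCoeff b s i j (r + 1) - ((i : ℝ) - r) * bCoeff b s i j r := by
  obtain ⟨-, hdiag, -, hrec⟩ := hb
  rcases lt_trichotomy r j with hrj | rfl | hjr
  · have := hrec s i (j + 1) (r + 1) le_add_self (by omega)
    simp only [bCoeff, Nat.add_sub_cancel, if_pos (by omega : r + 1 ≤ j + 1),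
      if_pos (by omega : r + 1 ≤ j), if_pos hrj.le, this]
    push_cast
    ring
  · have := hdiag s i (r + 1) le_add_self
    simp only [bCoeff, Nat.add_sub_cancel, le_refl, if_true, if_neg (by omega : ¬r + 1 ≤ r),
      this]
    push_cast
    ring
  · simp only [bCoeff, if_neg (by omega : ¬r + 1 ≤ j + 1), if_neg (by omega : ¬r + 1 ≤ j),
      if_neg (by omega : ¬r ≤ j)]
    ring

theorem bPoly_succ (hb : BRec b) (s i j : ℕ) :
    bPoly b s i (j + 1) = C ((s + j : ℕ) : ℝ) * bPoly b s i j - derivative (bPoly b s i j) := by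
  simp only [bPoly_eq_sum_bCoeff, derivative_sum, derivative_C_mul_X_pow, Finset.mul_sum]
  rw [sum_range_succ' _ i, sum_range_succ' _ i, sum_range_succ _ i]
  simp only [Nat.sub_self, Nat.cast_zero, mul_zero, C_0, zero_mul, add_zero, Nat.sub_zero,
    bCoeff_succ_zero hb, bCoeff_succ_succ hb]
  rw [add_sub_right_comm, ← sum_sub_distrib]
  congr 1
  · refine sum_congr rfl fun r hr => ?_
    rw [Nat.cast_sub (mem_range.mp hr).le, Nat.sub_sub]
    simp only [map_sub, map_mul, map_natCast]
    ring
  · simp only [map_mul]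
    ring

end Coefficients

section Brackets

variable {m : ℕ} {a : ℕ → ℕ → ℚ} {b : ℕ → ℕ → ℕ → ℕ → ℤ}

noncomputable def mainBracket (m : ℕ) (a : ℕ → ℕ → ℚ) (x : ℝ) : ℝ :=
  log x + log (log x) - 1 +
    ∑ s ∈ Icc 1 m, (-1) ^ (s + 1) / (s : ℝ) *
      ∑ i ∈ range (s + 1), (a i s : ℝ) * logTerm (X ^ i) s x

noncomputable def sumBracket (m : ℕ) (a : ℕ → ℕ → ℚ) (b : ℕ → ℕ → ℕ → ℕ → ℤ) (x : ℝ) : ℝ :=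
  log x + log (log x) - 3 / 2 - logChain (fun j => C (j.factorial : ℝ)) 1 m x / 2 +
    ∑ s ∈ Icc 1 m, (-1) ^ (s + 1) / (s : ℝ) *
      ∑ i ∈ range (s + 1), (a i s : ℝ) * logChain (bPoly b s i) s (m - s + 1) x

noncomputable def sumRemainder (m : ℕ) (a : ℕ → ℕ → ℚ) (b : ℕ → ℕ → ℕ → ℕ → ℤ) (x : ℝ) : ℝ :=
  (2 ^ (m + 1))⁻¹ * logTerm (C (m.factorial : ℝ)) (m + 1) x -
    ∑ s ∈ Icc 1 m, (-1) ^ (s + 1) / (s : ℝ) *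
      ∑ i ∈ range (s + 1), (a i s : ℝ) *
        ((2 ^ (m - s + 1))⁻¹ * logTerm (bPoly b s i (m - s + 1)) (m + 1) x)

theorem hasDerivAt_half_sq_mul_sumBracket (hb : BRec b) {x : ℝ} (hx : log x ≠ 0) :
    HasDerivAt (fun t => t ^ 2 / 2 * sumBracket m a b t)
      (x * (mainBracket m a x + sumRemainder m a b x)) x := by
  have hx0 : x ≠ 0 := ne_of_apply_ne log (by rwa [log_zero])
  have hlog : HasDerivAt (fun t => t ^ 2 / 2 * (log t + log (log t) - 3 / 2))
      (x * (log x + log (log x) - 1 + (2 * log x)⁻¹)) x := by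
    refine (hasDerivAt_half_sq_mul ((((hasDerivAt_log hx0).add
      ((hasDerivAt_log hx).comp x (hasDerivAt_log hx0))).sub_const (3 / 2)))).congr_deriv ?_
    simp only [Pi.add_apply, Function.comp_apply]
    field_simp
    ring
  have hfac := hasDerivAt_half_sq_mul_logChain (P := fun j => C (j.factorial : ℝ)) (s := 1)
    (fun j => by simp [Nat.factorial_succ, add_comm 1 j]) m hx
  have hb' := hasDerivAt_half_sq_mul_sum (Icc 1 m) (fun s => (-1) ^ (s + 1) / (s : ℝ))
    fun s _ => hasDerivAt_half_sq_mul_sum (range (s + 1)) (fun i => (a i s : ℝ))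
      fun i _ => hasDerivAt_half_sq_mul_logChain (bPoly_succ hb s i) (m - s + 1) hx
  refine (((hlog.sub (hfac.div_const 2)).add hb').congr_of_eventuallyEq
    (Eventually.of_forall fun t => by simp only [sumBracket, Pi.add_apply, Pi.sub_apply]; ring))
    |>.congr_deriv ?_
  simp only [mainBracket, sumRemainder, bPoly_zero hb, mul_sub, sum_sub_distrib]
  have hrem : ∑ s ∈ Icc 1 m, (-1) ^ (s + 1) / (s : ℝ) * ∑ i ∈ range (s + 1), (a i s : ℝ) *
        (logTerm (bPoly b s i (m - s + 1)) (s + (m - s + 1)) x / 2 ^ (m - s + 1)) =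
      ∑ s ∈ Icc 1 m, (-1) ^ (s + 1) / (s : ℝ) * ∑ i ∈ range (s + 1), (a i s : ℝ) *
        ((2 ^ (m - s + 1))⁻¹ * logTerm (bPoly b s i (m - s + 1)) (m + 1) x) :=
    sum_congr rfl fun s hs => by
      simp only [show s + (m - s + 1) = m + 1 by have := (mem_Icc.mp hs).2; omega,
        div_eq_inv_mul]
  have hlog_inv : logTerm (C (Nat.factorial 0 : ℝ)) 1 x = (log x)⁻¹ := by simp [logTerm]
  rw [hrem, hlog_inv, add_comm 1 m]
  ring

theorem mainBracket_eq (x : ℝ) :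
    log x + log (log x) - 1 +
      ∑ s ∈ Icc 1 m, (-1) ^ (s + 1) / ((s : ℝ) * log x ^ s) *
        ∑ i ∈ range (s + 1), (a i s : ℝ) * log (log x) ^ i = mainBracket m a x := by
  simp only [mainBracket, logTerm, eval_pow, eval_X, Finset.mul_sum]
  exact congrArg _ (sum_congr rfl fun s _ => sum_congr rfl fun i _ => by ring)

theorem hAux_eq (x : ℝ) : hAux m x = logChain (fun j => C (j.factorial : ℝ)) 1 m x / 2 := by
  rw [hAux, logChain, ← Finset.Ico_add_one_right_eq_Icc, sum_Ico_eq_sum_range, sum_div,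
    Nat.add_sub_cancel]
  refine sum_congr rfl fun j _ => ?_
  simp only [logTerm, eval_C, add_tsub_cancel_left]
  ring

theorem sumBracket_eq (x : ℝ) :
    gAux x - hAux m x +
      ∑ s ∈ Icc 1 m, (-1) ^ (s + 1) / ((s : ℝ) * log x ^ s) *
        ∑ i ∈ range (s + 1), (a i s : ℝ) *
          ∑ j ∈ range (m - s + 1), ∑ r ∈ range (min i j + 1),
            (b s i j r : ℝ) * log (log x) ^ (i - r) / (2 ^ j * log x ^ j) =
      sumBracket m a b x := by
  rw [sumBracket, gAux, hAux_eq]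
  simp only [logChain, logTerm, bPoly, eval_finsetSum, eval_mul, eval_C, eval_pow, eval_X,
    Finset.mul_sum, sum_div]
  exact congrArg _ (sum_congr rfl fun s _ => sum_congr rfl fun i _ => sum_congr rfl fun j _ =>
    sum_congr rfl fun r _ => by ring)

theorem isBigO_sum_sum {f : ℕ → ℕ → ℝ → ℝ} {g : ℝ → ℝ}
    (h : ∀ s ∈ Icc 1 m, ∀ i ∈ range (s + 1), f s i =O[atTop] g) :
    (fun x => ∑ s ∈ Icc 1 m, (-1) ^ (s + 1) / (s : ℝ) *
      ∑ i ∈ range (s + 1), (a i s : ℝ) * f s i x) =O[atTop] g :=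
  IsBigO.fun_sum fun s hs =>
    (IsBigO.fun_sum fun i hi => (h s hs i hi).const_mul_left _).const_mul_left _

-- `x` times the derivative of `mainBracket m a`, i.e. its derivative with respect to `log x`.
noncomputable def mainBracketDerivLog (m : ℕ) (a : ℕ → ℕ → ℚ) (x : ℝ) : ℝ :=
  1 + (log x)⁻¹ - ∑ s ∈ Icc 1 m, (-1) ^ (s + 1) / (s : ℝ) *
    ∑ i ∈ range (s + 1), (a i s : ℝ) * logTerm (C (s : ℝ) * X ^ i - derivative (X ^ i)) (s + 1) x

theorem hasDerivAt_mainBracket {x : ℝ} (hx : log x ≠ 0) :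
    HasDerivAt (mainBracket m a) (mainBracketDerivLog m a x / x) x := by
  have hx0 : x ≠ 0 := ne_of_apply_ne log (by rwa [log_zero])
  refine ((((hasDerivAt_log hx0).add ((hasDerivAt_log hx).comp x (hasDerivAt_log hx0))).sub_const
    1).add (HasDerivAt.fun_sum (u := Icc 1 m) fun s _ => (HasDerivAt.fun_sum (u := range (s + 1))
      fun i _ => (hasDerivAt_logTerm (X ^ i) s hx).const_mul (a i s : ℝ)).const_mul
        ((-1) ^ (s + 1) / (s : ℝ)))).congr_deriv ?_
  simp only [mainBracketDerivLog, sub_div, add_div, sum_div,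
    mul_div_assoc, neg_div, mul_neg, sum_neg_distrib]
  field_simp
  ring

theorem hasDerivAt_mul_mainBracket {x : ℝ} (hx : log x ≠ 0) :
    HasDerivAt (fun t => t * mainBracket m a t) (mainBracket m a x + mainBracketDerivLog m a x)
      x := by
  have hx0 : x ≠ 0 := ne_of_apply_ne log (by rwa [log_zero])
  refine ((hasDerivAt_id x).mul (hasDerivAt_mainBracket hx)).congr_deriv ?_
  simp only [id_eq, one_mul, mul_div_cancel₀ _ hx0]

theorem isBigO_mainBracket_log : mainBracket m a =O[atTop] log := by
  have hconst : (fun _ => (1 : ℝ)) =O[atTop] log := isLittleO_const_log_atTop.isBigO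
  exact (((isBigO_refl _ _).add (isLittleO_log_id_atTop.comp_tendsto tendsto_log_atTop).isBigO).sub
    hconst).add ((isBigO_sum_sum fun s _ i hi =>
      isBigO_logTerm_one ((natDegree_X_pow_le i).trans (by simpa [Nat.lt_succ_iff] using hi))).trans
        hconst)

theorem isBigO_mainBracketDerivLog_one :
    mainBracketDerivLog m a =O[atTop] fun _ => (1 : ℝ) :=
  ((isBigO_refl _ _).add ((tendsto_inv_atTop_zero.comp tendsto_log_atTop).isBigO_one ℝ)).sub
    (isBigO_sum_sum fun s _ i hi => isBigO_logTerm_one ((natDegree_sub_le _ _).trans (max_le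
      ((natDegree_C_mul_le _ _).trans ((natDegree_X_pow_le i).trans
        (by simp only [mem_range] at hi; omega)))
      ((natDegree_derivative_le _).trans
        (by simp only [natDegree_X_pow, mem_range] at hi ⊢; omega)))))

theorem isBigO_mul_sumRemainder_cAux :
    (fun x => x * sumRemainder m a b x) =O[atTop] cAux m := by
  have hE : (fun x => sumRemainder m a b x) =O[atTop]
      fun x => log (log x) ^ (m + 1) / log x ^ (m + 1) := by
    simp only [sumRemainder]
    exact ((isBigO_logTerm (by simp) _).const_mul_left _).sub (isBigO_sum_sum fun s hs i hi =>
      (isBigO_logTerm ((natDegree_bPoly_le s i _).trans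
        (by have := mem_range.mp hi; have := (mem_Icc.mp hs).2; omega)) _).const_mul_left _)
  exact ((isBigO_refl (fun x : ℝ => x) _).mul hE).congr_right fun x => by rw [cAux, mul_div_assoc]

end Brackets

section Growth

variable {m : ℕ}

theorem eventually_sqrt_le_cAux (m : ℕ) : ∀ᶠ x in atTop, √x ≤ cAux m x := by
  filter_upwards [(isLittleO_log_rpow_rpow_atTop ((m + 1 : ℕ) : ℝ) one_half_pos).bound one_pos,
    eventually_gt_atTop 0, tendsto_log_atTop.eventually_gt_atTop 0,
    (tendsto_log_atTop.comp tendsto_log_atTop).eventually_ge_atTop 1] with x hlog hx hL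
    (hY : 1 ≤ log (log x))
  rw [rpow_natCast, one_mul, ← sqrt_eq_rpow, Real.norm_of_nonneg (by positivity),
    Real.norm_of_nonneg (sqrt_nonneg x)] at hlog
  calc √x = x / √x := (div_sqrt).symm
    _ ≤ x / log x ^ (m + 1) := div_le_div_of_nonneg_left hx.le (by positivity) hlog
    _ ≤ x * log (log x) ^ (m + 1) / log x ^ (m + 1) := by
        gcongr
        exact le_mul_of_one_le_right hx.le (one_le_pow₀ hY)

theorem cAux_le_self {x : ℝ} (hx : 0 ≤ x) (hL : 1 ≤ log x) : cAux m x ≤ x := by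
  have hY : 0 ≤ log (log x) := log_nonneg hL
  rw [cAux, div_le_iff₀ (by positivity)]
  exact mul_le_mul_of_nonneg_left (pow_le_pow_left₀ hY (log_le_self (by linarith)) _) hx

theorem cAux_le_two_pow_mul_cAux {x y : ℝ} (hL : 1 ≤ log x) (hxy : x ≤ y) (hyx : √y ≤ x) :
    cAux m x ≤ 2 ^ (m + 1) * cAux m y := by
  have hx : 0 < x := by
    rcases (sqrt_nonneg y).trans hyx |>.lt_or_eq with h | h
    · exact h
    · simp [← h] at hL; linarith
  have hy : 0 < y := hx.trans_le hxy
  have hLy : log y / 2 ≤ log x := by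
    rw [← log_sqrt hy.le]
    exact log_le_log (sqrt_pos.mpr hy) hyx
  have hLy0 : 0 < log y / 2 := by linarith [log_le_log hx hxy]
  have hYxy : log (log x) ≤ log (log y) := log_le_log (by linarith) (log_le_log hx hxy)
  have hY : 0 ≤ log (log x) := log_nonneg hL
  calc cAux m x = x * log (log x) ^ (m + 1) / log x ^ (m + 1) := rfl
    _ ≤ y * log (log y) ^ (m + 1) / (log y / 2) ^ (m + 1) := by
        gcongr
        exact mul_nonneg hy.le (pow_nonneg (hY.trans hYxy) _)
    _ = 2 ^ (m + 1) * cAux m y := by rw [cAux, div_pow]; field_simp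

theorem eventually_cAux_le_mul_cAux (m : ℕ) :
    ∀ᶠ x in atTop, ∀ y, x ≤ y → cAux m x ≤ 2 ^ (m + 1) * cAux m y := by
  obtain ⟨X, hX⟩ := eventually_atTop.mp (eventually_sqrt_le_cAux m)
  filter_upwards [eventually_ge_atTop X, eventually_ge_atTop 0,
    tendsto_log_atTop.eventually_ge_atTop 1] with x hxX hx hL y hxy
  rcases le_total (√y) x with hyx | hxy'
  · exact cAux_le_two_pow_mul_cAux hL hxy hyx
  · have hsqrt := hX y (hxX.trans hxy)
    calc cAux m x ≤ x := cAux_le_self hx hL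
      _ ≤ cAux m y := hxy'.trans hsqrt
      _ ≤ 2 ^ (m + 1) * cAux m y :=
        le_mul_of_one_le_left ((sqrt_nonneg y).trans hsqrt) (one_le_pow₀ one_le_two)

theorem eventually_one_le_cAux (m : ℕ) : ∀ᶠ x in atTop, 1 ≤ cAux m x := by
  filter_upwards [eventually_sqrt_le_cAux m, eventually_ge_atTop 1] with x h hx
  exact (one_le_sqrt.mpr hx).trans h

theorem isBigO_log_cAux (m : ℕ) : log =O[atTop] cAux m :=
  (isLittleO_log_rpow_atTop one_half_pos).isBigO.trans <| IsBigO.of_bound 1 <| by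
    filter_upwards [eventually_sqrt_le_cAux m, eventually_ge_atTop 0] with x h hx
    rw [← sqrt_eq_rpow, one_mul, Real.norm_of_nonneg (sqrt_nonneg x),
      Real.norm_of_nonneg ((sqrt_nonneg x).trans h)]
    exact h

end Growth

end SumPrimes

theorem sum_primes_general_asymptotic_general (m : ℕ) (a : ℕ → ℕ → ℚ) (hyp : PrimeHyp m a)
    (b : ℕ → ℕ → ℕ → ℕ → ℤ) (hb : BRec b) :
    (fun n : ℕ =>
        (∑ k ∈ Finset.Icc 1 n, (nthPrime k : ℝ)) -
          (n : ℝ) ^ 2 / 2 *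
            (gAux n - hAux m n +
              ∑ s ∈ Finset.Icc 1 m, (-1) ^ (s + 1) / ((s : ℝ) * Real.log n ^ s) *
                ∑ i ∈ Finset.range (s + 1), (a i s : ℝ) *
                  ∑ j ∈ Finset.range (m - s + 1), ∑ r ∈ Finset.range (min i j + 1),
                    (b s i j r : ℝ) * Real.log (Real.log n) ^ (i - r) /
                      (2 ^ j * Real.log n ^ j)))
      =O[atTop] fun n : ℕ => (n : ℝ) * cAux m n := by
  set T : ℝ → ℝ := fun t => t ^ 2 / 2 * SumPrimes.sumBracket m a b t
  have hderiv : ∀ᶠ t in atTop,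
      HasDerivAt T (t * SumPrimes.mainBracket m a t + t * SumPrimes.sumRemainder m a b t) t ∧
      HasDerivAt (fun t => t * SumPrimes.mainBracket m a t)
        (SumPrimes.mainBracket m a t + SumPrimes.mainBracketDerivLog m a t) t := by
    filter_upwards [tendsto_log_atTop.eventually_gt_atTop 0] with t ht
    exact ⟨by simpa only [mul_add] using SumPrimes.hasDerivAt_half_sq_mul_sumBracket hb ht.ne',
      SumPrimes.hasDerivAt_mul_mainBracket ht.ne'⟩
  have hstep := SumPrimes.isBigO_sub_sub_of_hasDerivAt (hderiv.mono fun _ h => h.1)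
    (hderiv.mono fun _ h => h.2) SumPrimes.isBigO_mul_sumRemainder_cAux
    ((SumPrimes.isBigO_mainBracket_log.add (SumPrimes.isBigO_mainBracketDerivLog_one.trans
      isLittleO_const_log_atTop.isBigO)).trans (SumPrimes.isBigO_log_cAux m))
    ((SumPrimes.eventually_one_le_cAux m).mono fun _ h => zero_le_one.trans h)
    (SumPrimes.eventually_cAux_le_mul_cAux m)
  have hprime : (fun k : ℕ => (nthPrime k : ℝ) - k * SumPrimes.mainBracket m a k) =O[atTop]
      fun k : ℕ => cAux m k := by
    simpa only [PrimeHyp, SumPrimes.mainBracket_eq] using hyp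
  refine (SumPrimes.isBigO_sum_Icc (hprime.sub hstep) (SumPrimes.eventually_one_le_cAux m)
    (SumPrimes.eventually_cAux_le_mul_cAux m)).congr_left fun n => ?_
  simp only [sub_sub_sub_cancel_right]
  rw [Finset.sum_sub_distrib, SumPrimes.sum_Icc_sub_eq T n]
  simp [T, SumPrimes.sumBracket_eq]

/-- Main theorem: for coefficients `a` satisfying the prime asymptotic hypothesis (210),
`∑_{k ≤ n} p_k = (n²/2)(g(n) - h_m(n)
  + ∑_{s=1}^m ((-1)^{s+1}/(s log^s n)) ∑_{i=0}^s a_{is} ∑_{j=0}^{m-s} ∑_{r=0}^{min(i,j)}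
      b_{s,i,j,r} (log log n)^{i-r} / (2^j log^j n)) + O(n c_m(n))`. -/
theorem sum_primes_general_asymptotic (m : ℕ) (hm : 1 ≤ m) (a : ℕ → ℕ → ℚ)
    (ha : ∀ s : ℕ, 1 ≤ s → s ≤ m → a s s = 1) (hyp : PrimeHyp m a)
    (b : ℕ → ℕ → ℕ → ℕ → ℤ) (hb : BRec b) :
    (fun n : ℕ =>
        (∑ k ∈ Finset.Icc 1 n, (nthPrime k : ℝ)) -
          (n : ℝ) ^ 2 / 2 *
            (gAux n - hAux m n +
              ∑ s ∈ Finset.Icc 1 m, (-1) ^ (s + 1) / ((s : ℝ) * Real.log n ^ s) *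
                ∑ i ∈ Finset.range (s + 1), (a i s : ℝ) *
                  ∑ j ∈ Finset.range (m - s + 1), ∑ r ∈ Finset.range (min i j + 1),
                    (b s i j r : ℝ) * Real.log (Real.log n) ^ (i - r) /
                      (2 ^ j * Real.log n ^ j)))
      =O[atTop] fun n : ℕ => (n : ℝ) * cAux m n :=
  sum_primes_general_asymptotic_general m a hyp b hb
end

section
/- Let $s, i, t \in \mathbb{N}_0$ with $s \geq 1$ and $i \leq s$, and let $b_{s,i,j,r}$ be the integers defined by the recurrence below. Then as $n \to \infty$, $\int_3^n \frac{x(\log \log x)^i}{\log^s x}\, dx = \sum_{j=0}^t \sum_{r=0}^{\min\{i,j\}} \frac{b_{s,i,j,r}\, n^2(\log \log n)^{i-r}}{2^{j+1}\log^{s+j}n} + \int_3^n \sum_{r=0}^{\min\{i,t+1\}} \frac{b_{s,i,t+1,r}\, x(\log \log x)^{i-r}}{2^{t+1}\log^{s+t+1}x} \,dx + O(1)$. -/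
open Filter Real

/-!
Let `Q_j = ∑_r b_{s,i,j,r} X^{i-r}`, `E_j(x) = x Q_j(log log x) / (2^j log^{s+j} x)` and
`G_j(x) = x² Q_j(log log x) / (2^{j+1} log^{s+j} x)`. The recurrence for `b` says precisely that
`Q_{j+1} = (s + j) Q_j - Q_j'`, and with it the product rule gives `G_j' = E_j - E_{j+1}` on
`(1, ∞)`. As `E_0` is the integrand on the left, integrating over `[3, n]` and telescoping over
`j ≤ t` yields the expansion with the `O(1)` term equal to the constant `-∑_{j ≤ t} G_j(3)`.
-/

namespace IteratedByParts

open Polynomial Finset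

section Coefficients

variable (b : ℕ → ℕ → ℕ → ℕ → ℤ) (s i : ℕ)

noncomputable def bPoly (j : ℕ) : ℝ[X] :=
  ∑ r ∈ range (min i j + 1), C (b s i j r : ℝ) * X ^ (i - r)

/-- Extending `b` by zero beyond `r = j` turns the four cases of `BRec` into two identities
valid for every `r`. -/
def bCoeff (j r : ℕ) : ℝ :=
  if r ≤ j then b s i j r else 0

variable {b}

lemma bPoly_zero (hb : BRec b) : bPoly b s i 0 = X ^ i := by
  simp [bPoly, hb.1]

lemma sum_b_mul_div_eq_eval_bPoly (j : ℕ) (y M d : ℝ) :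
    ∑ r ∈ range (min i j + 1), (b s i j r : ℝ) * y * M ^ (i - r) / d
      = y * (bPoly b s i j).eval M / d := by
  simp only [bPoly, eval_finsetSum, eval_mul, eval_C, eval_pow, eval_X, mul_sum, sum_div]
  exact sum_congr rfl fun r _ => by ring

lemma bCoeff_succ_zero (hb : BRec b) (j : ℕ) :
    bCoeff b s i (j + 1) 0 = (s + j) * bCoeff b s i j 0 := by
  simp only [bCoeff, zero_le, if_true, hb.2.2.1 s i (j + 1) (by omega), Nat.add_sub_cancel]
  push_cast
  ring

lemma bCoeff_succ_succ (hb : BRec b) (j r : ℕ) :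
    bCoeff b s i (j + 1) (r + 1)
      = (s + j) * bCoeff b s i j (r + 1) - (i - r) * bCoeff b s i j r := by
  rcases lt_trichotomy r j with hrj | rfl | hrj
  · simp only [bCoeff, if_pos (by omega : r + 1 ≤ j + 1), if_pos (by omega : r + 1 ≤ j),
      if_pos hrj.le, hb.2.2.2 s i (j + 1) (r + 1) (by omega) (by omega), Nat.add_sub_cancel]
    push_cast
    ring
  · simp only [bCoeff, le_refl, if_true, if_neg (by omega : ¬ r + 1 ≤ r),
      hb.2.1 s i (r + 1) (by omega), Nat.add_sub_cancel]
    push_cast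
    ring
  · simp only [bCoeff, if_neg (by omega : ¬ r + 1 ≤ j + 1), if_neg (by omega : ¬ r + 1 ≤ j),
      if_neg (by omega : ¬ r ≤ j)]
    ring

lemma bPoly_eq_sum_range (j : ℕ) :
    bPoly b s i j = ∑ r ∈ range (i + 1), C (bCoeff b s i j r) * X ^ (i - r) := by
  have hrange : range (min i j + 1) = (range (i + 1)).filter (· ≤ j) := by
    ext r
    simp only [mem_range, mem_filter]
    omega
  rw [bPoly, hrange, sum_filter]
  refine sum_congr rfl fun r _ => ?_
  unfold bCoeff
  split_ifs <;> simp

lemma bPoly_succ (hb : BRec b) (j : ℕ) :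
    bPoly b s i (j + 1) = C ((s : ℝ) + j) * bPoly b s i j - derivative (bPoly b s i j) := by
  simp only [bPoly_eq_sum_range, derivative_sum, derivative_C_mul_X_pow]
  rw [sum_range_succ', sum_range_succ', sum_range_succ, mul_add, mul_sum, Nat.sub_self,
    Nat.cast_zero, mul_zero, C_0, zero_mul, add_zero, bCoeff_succ_zero s i hb,
    add_sub_right_comm, ← sum_sub_distrib]
  congr 1
  · refine sum_congr rfl fun r hr => ?_
    rw [bCoeff_succ_succ s i hb, Nat.cast_sub (by simp at hr; omega), Nat.sub_sub]
    simp only [map_sub, map_mul, map_natCast]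
    ring
  · simp only [Nat.sub_zero, map_mul, map_add, map_natCast]
    ring

end Coefficients

section Telescoping

variable (Q : ℕ → ℝ[X]) (s : ℕ)

noncomputable def integrand (j : ℕ) (x : ℝ) : ℝ :=
  x * (Q j).eval (log (log x)) / (2 ^ j * log x ^ (s + j))

noncomputable def boundary (j : ℕ) (x : ℝ) : ℝ :=
  x ^ 2 * (Q j).eval (log (log x)) / (2 ^ (j + 1) * log x ^ (s + j))

lemma hasDerivAt_sq_mul_eval_loglog_div (P : ℝ[X]) (m : ℕ) {x : ℝ} (hx : 1 < x) :
    HasDerivAt (fun y => y ^ 2 * P.eval (log (log y)) / log y ^ m)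
      (2 * x * P.eval (log (log x)) / log x ^ m
        + x * ((derivative P).eval (log (log x)) - m * P.eval (log (log x))) / log x ^ (m + 1))
      x := by
  have hx0 : x ≠ 0 := by positivity
  have hlog : log x ≠ 0 := (log_pos hx).ne'
  have hloglog : HasDerivAt (fun y => log (log y)) ((log x)⁻¹ * x⁻¹) x :=
    (hasDerivAt_log hlog).comp x (hasDerivAt_log hx0)
  have hnum := (hasDerivAt_pow 2 x).fun_mul ((P.hasDerivAt _).comp x hloglog)
  refine (hnum.fun_div ((hasDerivAt_log hx0).fun_pow m) (pow_ne_zero m hlog)).congr_deriv ?_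
  rcases m with _ | m
  · simp only [Function.comp_apply]
    field_simp
    ring
  · simp only [Nat.add_sub_cancel, Function.comp_apply]
    field_simp
    ring

variable {Q s}

lemma hasDerivAt_boundary (hQ : ∀ j, Q (j + 1) = C ((s : ℝ) + j) * Q j - derivative (Q j))
    (j : ℕ) {x : ℝ} (hx : 1 < x) :
    HasDerivAt (boundary Q s j) (integrand Q s j x - integrand Q s (j + 1) x) x := by
  have hlog : log x ≠ 0 := (log_pos hx).ne'
  have hderiv : (derivative (Q j)).eval (log (log x))
      = (s + j) * (Q j).eval (log (log x)) - (Q (j + 1)).eval (log (log x)) := by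
    simp [hQ j]
  have h := (hasDerivAt_sq_mul_eval_loglog_div (Q j) (s + j) hx).div_const (2 ^ (j + 1))
  simp only [div_div, mul_comm _ ((2 : ℝ) ^ (j + 1))] at h
  refine h.congr_deriv ?_
  rw [hderiv, integrand, integrand]
  field_simp
  push_cast
  ring

variable (Q s)

lemma continuousOn_integrand (j : ℕ) : ContinuousOn (integrand Q s j) (Set.Ioi 1) := by
  have hlog : ∀ x ∈ Set.Ioi (1 : ℝ), log x ≠ 0 := fun x hx => (log_pos hx).ne'
  have hx0 : ∀ x ∈ Set.Ioi (1 : ℝ), x ≠ 0 := fun x (hx : 1 < x) => by positivity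
  have hden : ∀ x ∈ Set.Ioi (1 : ℝ), 2 ^ j * log x ^ (s + j) ≠ 0 := fun x hx =>
    mul_ne_zero (by positivity) (pow_ne_zero _ (hlog x hx))
  unfold integrand
  fun_prop (disch := assumption)

variable {Q s}

lemma integral_integrand_sub_succ
    (hQ : ∀ j, Q (j + 1) = C ((s : ℝ) + j) * Q j - derivative (Q j))
    {a n : ℝ} (ha : 1 < a) (hn : 1 < n) (j : ℕ) :
    (∫ x in a..n, integrand Q s j x) - ∫ x in a..n, integrand Q s (j + 1) x
      = boundary Q s j n - boundary Q s j a := by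
  have hsub : Set.uIcc a n ⊆ Set.Ioi 1 := Set.ordConnected_Ioi.uIcc_subset ha hn
  have hint (k : ℕ) : IntervalIntegrable (integrand Q s k) MeasureTheory.volume a n :=
    ((continuousOn_integrand Q s k).mono hsub).intervalIntegrable
  rw [← intervalIntegral.integral_sub (hint j) (hint (j + 1))]
  exact intervalIntegral.integral_eq_sub_of_hasDerivAt
    (fun x hx => hasDerivAt_boundary hQ j (hsub hx)) ((hint j).sub (hint (j + 1)))

lemma integral_integrand_zero
    (hQ : ∀ j, Q (j + 1) = C ((s : ℝ) + j) * Q j - derivative (Q j))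
    {a n : ℝ} (ha : 1 < a) (hn : 1 < n) (t : ℕ) :
    ∫ x in a..n, integrand Q s 0 x
      = ∑ j ∈ range (t + 1), (boundary Q s j n - boundary Q s j a)
        + ∫ x in a..n, integrand Q s (t + 1) x := by
  rw [← sum_congr rfl fun j _ => integral_integrand_sub_succ hQ ha hn j, sum_range_sub']
  ring

end Telescoping

end IteratedByParts

open IteratedByParts Finset in
theorem integral_iterated_by_parts_general (b : ℕ → ℕ → ℕ → ℕ → ℤ) (hb : BRec b)
    (s i t : ℕ) :
    (fun n : ℝ =>
        (∫ x in (3 : ℝ)..n, x * Real.log (Real.log x) ^ i / Real.log x ^ s) -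
          (∑ j ∈ Finset.range (t + 1), ∑ r ∈ Finset.range (min i j + 1),
              (b s i j r : ℝ) * n ^ 2 * Real.log (Real.log n) ^ (i - r) /
                (2 ^ (j + 1) * Real.log n ^ (s + j))) -
          ∫ x in (3 : ℝ)..n,
            ∑ r ∈ Finset.range (min i (t + 1) + 1),
              (b s i (t + 1) r : ℝ) * x * Real.log (Real.log x) ^ (i - r) /
                (2 ^ (t + 1) * Real.log x ^ (s + t + 1)))
      =O[atTop] fun _ : ℝ => (1 : ℝ) := by
  have hfirst : (fun x : ℝ => x * log (log x) ^ i / log x ^ s) = integrand (bPoly b s i) s 0 := by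
    ext x
    simp [integrand, bPoly_zero s i hb]
  simp only [sum_b_mul_div_eq_eval_bPoly]
  have hconst : ∀ n : ℝ, 3 ≤ n →
      ((∫ x in (3 : ℝ)..n, x * log (log x) ^ i / log x ^ s)
        - ∑ j ∈ range (t + 1), boundary (bPoly b s i) s j n
        - ∫ x in (3 : ℝ)..n, integrand (bPoly b s i) s (t + 1) x)
      = -∑ j ∈ range (t + 1), boundary (bPoly b s i) s j 3 := fun n hn => by
    rw [hfirst, integral_integrand_zero (bPoly_succ s i hb) (by norm_num) (by linarith) t,
      sum_sub_distrib]
    ring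
  refine EventuallyEq.trans_isBigO ?_ (Asymptotics.isBigO_const_const
    (-∑ j ∈ range (t + 1), boundary (bPoly b s i) s j 3) one_ne_zero atTop)
  filter_upwards [eventually_ge_atTop 3] with n hn using hconst n hn

/-- For `s ≥ 1`, `i ≤ s` and every `t ∈ ℕ₀`, as `n → ∞`:
`∫_3^n x (log log x)^i / log^s x dx
  = ∑_{j=0}^t ∑_{r=0}^{min(i,j)} b_{s,i,j,r} n² (log log n)^{i-r} / (2^{j+1} log^{s+j} n)
    + ∫_3^n ∑_{r=0}^{min(i,t+1)} b_{s,i,t+1,r} x (log log x)^{i-r} / (2^{t+1} log^{s+t+1} x) dx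
    + O(1)`. -/
theorem integral_iterated_by_parts (b : ℕ → ℕ → ℕ → ℕ → ℤ) (hb : BRec b)
    (s i t : ℕ) (hs : 1 ≤ s) (hi : i ≤ s) :
    (fun n : ℝ =>
        (∫ x in (3 : ℝ)..n, x * Real.log (Real.log x) ^ i / Real.log x ^ s) -
          (∑ j ∈ Finset.range (t + 1), ∑ r ∈ Finset.range (min i j + 1),
              (b s i j r : ℝ) * n ^ 2 * Real.log (Real.log n) ^ (i - r) /
                (2 ^ (j + 1) * Real.log n ^ (s + j))) -
          ∫ x in (3 : ℝ)..n,
            ∑ r ∈ Finset.range (min i (t + 1) + 1),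
              (b s i (t + 1) r : ℝ) * x * Real.log (Real.log x) ^ (i - r) /
                (2 ^ (t + 1) * Real.log x ^ (s + t + 1)))
      =O[atTop] fun _ : ℝ => (1 : ℝ) :=
  integral_iterated_by_parts_general b hb s i t
end

section
/- Let $m \in \mathbb{N}$, let $s, i \in \mathbb{N}_0$ with $1 \leq s \leq m$ and $0 \leq i \leq s$, and let $b_{s,i,j,r}$ be the integers defined by the recurrence below. Then as $n \to \infty$, $\int_3^n \frac{x(\log \log x)^i}{\log^s x}\, dx = \sum_{j=0}^{m-s} \sum_{r=0}^{\min\{i,j\}} \frac{b_{s,i,j,r}\, n^2(\log \log n)^{i-r}}{2^{j+1}\log^{s+j}n} + O\left( \frac{n^2(\log \log n)^i}{\log^{m+1}n} \right)$. -/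
open Filter Real
open Polynomial Asymptotics Finset MeasureTheory Set

theorem hasDerivAt_sq_mul_eval_loglog_div_log_pow (P : ℝ[X]) (c : ℕ) {x : ℝ} (hx : 1 < x) :
    HasDerivAt (fun y => y ^ 2 * P.eval (log (log y)) / log y ^ c)
      (2 * x * P.eval (log (log x)) / log x ^ c +
        x * (P.derivative.eval (log (log x)) - c * P.eval (log (log x))) / log x ^ (c + 1)) x := by
  have hx0 : x ≠ 0 := by positivity
  have hL : log x ≠ 0 := (log_pos hx).ne'
  have hlog := hasDerivAt_log hx0
  have hP := (P.hasDerivAt _).comp x ((hasDerivAt_log hL).comp x hlog)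
  refine (((hasDerivAt_pow 2 x).fun_mul hP).fun_div (hlog.fun_pow c)
    (pow_ne_zero c hL)).congr_deriv ?_
  simp only [Function.comp_apply]
  cases c with
  | zero => field_simp; ring
  | succ c => simp only [Nat.add_sub_cancel]; field_simp; ring

theorem isBigO_mul_eval_loglog {P : ℝ[X]} {i : ℕ} (hP : P.natDegree ≤ i) (g : ℝ → ℝ) :
    (fun x => g x * P.eval (log (log x))) =O[atTop] fun x => g x * log (log x) ^ i := by
  have hdeg : P.degree ≤ (X ^ i : ℝ[X]).degree := by
    rw [degree_X_pow]; exact degree_le_of_natDegree_le hP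
  simpa using (isBigO_refl g atTop).mul ((isBigO_atTop_of_degree_le P _ hdeg).comp_tendsto
    (tendsto_log_atTop.comp tendsto_log_atTop))

theorem isBigO_const_of_tendsto_atTop {F : ℝ → ℝ} (hF : Tendsto F atTop atTop) (d : ℝ) :
    (fun _ => d) =O[atTop] F :=
  (isLittleO_const_left.2 (Or.inr (tendsto_norm_atTop_atTop.comp hF))).isBigO

theorem tendsto_sq_mul_loglog_pow_div_log_pow (i c : ℕ) :
    Tendsto (fun x => x ^ 2 * log (log x) ^ i / log x ^ c) atTop atTop := by
  refine tendsto_atTop_mono' atTop ?_ tendsto_id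
  filter_upwards [isLittleO_pow_log_id_atTop.bound one_pos,
    (tendsto_log_atTop.comp tendsto_log_atTop).eventually_ge_atTop 1,
    eventually_gt_atTop 1] with x hLc hLL hx
  have hL : 0 < log x := log_pos hx
  rw [norm_of_nonneg (by positivity), one_mul, id, norm_of_nonneg (by positivity)] at hLc
  rw [id, le_div_iff₀ (by positivity)]
  calc x * log x ^ c ≤ x * x := by gcongr
    _ ≤ x ^ 2 * log (log x) ^ i := by
      rw [← sq]; exact le_mul_of_one_le_right (by positivity) (one_le_pow₀ hLL)

theorem isBigO_integral_of_isBigO_deriv {V F F' : ℝ → ℝ} {a : ℝ} (hV : ContinuousOn V (Ici a))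
    (hF : ∀ x ∈ Ici a, HasDerivAt F (F' x) x) (hVF : V =O[atTop] F')
    (hF' : ∀ᶠ x in atTop, 0 ≤ F' x) (hF_top : Tendsto F atTop atTop) :
    (fun n => ∫ x in a..n, V x) =O[atTop] F := by
  obtain ⟨C, hC0, hC⟩ := hVF.exists_nonneg
  obtain ⟨c, hc⟩ := eventually_atTop.1 ((hC.bound.and hF').and (eventually_ge_atTop a))
  have hca : a ≤ c := (hc c le_rfl).2
  have hint : ∀ p ∈ Ici a, ∀ q ∈ Ici a, IntervalIntegrable V volume p q := fun p hp q hq =>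
    (hV.mono (ordConnected_Ici.uIcc_subset hp hq)).intervalIntegrable
  have htail : (fun n => ∫ x in c..n, V x) =O[atTop] fun n => F n - F c := by
    refine .of_bound C (eventually_atTop.2 ⟨c, fun n hn => ?_⟩)
    have hsub : Icc c n ⊆ Ici a := fun x hx => hca.trans hx.1
    calc ‖∫ x in c..n, V x‖ ≤ ∫ x in c..n, ‖V x‖ :=
          intervalIntegral.norm_integral_le_integral_norm hn
      _ ≤ C * F n - C * F c := by
          refine intervalIntegral.integral_le_sub_of_hasDeriv_right_of_le hn
            (fun x hx => ((hF x (hsub hx)).continuousAt.const_mul C).continuousWithinAt)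
            (fun x hx => ((hF x (hsub (Ioo_subset_Icc_self hx))).const_mul C).hasDerivWithinAt)
            (hV.mono hsub).norm.integrableOn_Icc fun x hx => ?_
          obtain ⟨⟨hVx, hF'x⟩, -⟩ := hc x hx.1.le
          rwa [norm_of_nonneg hF'x] at hVx
      _ ≤ C * ‖F n - F c‖ := by
          rw [← mul_sub]; exact mul_le_mul_of_nonneg_left (le_norm_self _) hC0
  refine ((isBigO_const_of_tendsto_atTop hF_top (∫ x in a..c, V x)).add
    (htail.trans ((isBigO_refl F _).sub (isBigO_const_of_tendsto_atTop hF_top _)))).congr'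
    (eventually_atTop.2 ⟨c, fun n hn => ?_⟩) .rfl
  exact intervalIntegral.integral_add_adjacent_intervals (hint a self_mem_Ici c hca)
    (hint c hca n (hca.trans hn))

theorem eventually_mul_loglog_pow_div_log_pow_le (i c : ℕ) :
    ∀ᶠ x in atTop, 0 ≤ x * log (log x) ^ i / log x ^ c ∧
      x * log (log x) ^ i / log x ^ c ≤ 2 * x * log (log x) ^ i / log x ^ c
        + x * (i * log (log x) ^ (i - 1) - c * log (log x) ^ i) / log x ^ (c + 1) := by
  filter_upwards [tendsto_log_atTop.eventually_ge_atTop (max 1 c), eventually_gt_atTop 1]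
    with x hLc hx
  have hL : 0 < log x := log_pos hx
  have hLL : 0 ≤ log (log x) := log_nonneg (le_of_max_le_left hLc)
  have hLc' : 0 ≤ log x - c := sub_nonneg.2 (le_of_max_le_right hLc)
  have hdiff : 2 * x * log (log x) ^ i / log x ^ c
      + x * (i * log (log x) ^ (i - 1) - c * log (log x) ^ i) / log x ^ (c + 1)
      - x * log (log x) ^ i / log x ^ c
      = (x * log (log x) ^ i * (log x - c) + i * x * log (log x) ^ (i - 1)) / log x ^ (c + 1) := by
    field_simp
    ring
  exact ⟨by positivity, sub_nonneg.1 (hdiff ▸ by positivity)⟩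

theorem isBigO_integral_of_isBigO_mul_loglog_pow {V : ℝ → ℝ} {a : ℝ} (ha : 1 < a) {i c : ℕ}
    (hV : ContinuousOn V (Ici a)) (hVO : V =O[atTop] fun x => x * log (log x) ^ i / log x ^ c) :
    (fun n => ∫ x in a..n, V x) =O[atTop] fun n => n ^ 2 * log (log n) ^ i / log n ^ c := by
  have hF := fun x (hx : x ∈ Ici a) =>
    hasDerivAt_sq_mul_eval_loglog_div_log_pow (X ^ i) c (ha.trans_le hx)
  simp only [eval_pow, eval_X, derivative_X_pow, eval_mul, eval_C] at hF
  have hle := eventually_mul_loglog_pow_div_log_pow_le i c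
  refine isBigO_integral_of_isBigO_deriv hV hF (hVO.trans (.of_bound' ?_)) ?_
    (tendsto_sq_mul_loglog_pow_div_log_pow i c)
  · filter_upwards [hle] with x hx
    rw [norm_of_nonneg hx.1, norm_of_nonneg (hx.1.trans hx.2)]
    exact hx.2
  · filter_upwards [hle] with x hx using hx.1.trans hx.2

section Recurrence

/-- `b s i j r` extended by zero to `r > j`, where the recurrence leaves it unspecified. -/
def bCoeff (b : ℕ → ℕ → ℕ → ℕ → ℤ) (s i j r : ℕ) : ℤ := if r ≤ j then b s i j r else 0

noncomputable def bPoly (b : ℕ → ℕ → ℕ → ℕ → ℤ) (s i j : ℕ) : ℝ[X] :=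
  ∑ r ∈ range (i + 1), C (bCoeff b s i j r : ℝ) * X ^ (i - r)

variable {b : ℕ → ℕ → ℕ → ℕ → ℤ} (s i : ℕ)

theorem sum_range_min_eq_sum_bCoeff (j : ℕ) (g : ℕ → ℝ) :
    ∑ r ∈ range (min i j + 1), (b s i j r : ℝ) * g r
      = ∑ r ∈ range (i + 1), (bCoeff b s i j r : ℝ) * g r := by
  simp only [bCoeff, Int.cast_ite, Int.cast_zero, ite_mul, zero_mul, ← sum_filter]
  congr 1
  ext r
  simp only [Finset.mem_range, mem_filter]
  omega

theorem bCoeff_succ_zero (hb : BRec b) (j : ℕ) :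
    bCoeff b s i (j + 1) 0 = (s + j) * bCoeff b s i j 0 := by
  simp only [bCoeff, zero_le, if_true, hb.2.2.1 s i (j + 1) (by omega), Nat.add_sub_cancel]
  push_cast; ring

theorem bCoeff_succ_succ (hb : BRec b) (j r : ℕ) :
    bCoeff b s i (j + 1) (r + 1)
      = (s + j) * bCoeff b s i j (r + 1) - (i - r) * bCoeff b s i j r := by
  obtain hrj | rfl | hjr := lt_trichotomy r j
  · simp only [bCoeff, if_pos (by omega : r + 1 ≤ j + 1), if_pos (by omega : r + 1 ≤ j),
      if_pos hrj.le, hb.2.2.2 s i (j + 1) (r + 1) (by omega) (by omega), Nat.add_sub_cancel]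
    push_cast; ring
  · simp only [bCoeff, le_refl, if_true, if_neg (by omega : ¬ r + 1 ≤ r),
      hb.2.1 s i (r + 1) (by omega), Nat.add_sub_cancel]
    push_cast; ring
  · simp only [bCoeff, if_neg (by omega : ¬ r + 1 ≤ j + 1), if_neg (by omega : ¬ r + 1 ≤ j),
      if_neg (by omega : ¬ r ≤ j)]
    ring

theorem natDegree_bPoly_le (j : ℕ) : (bPoly b s i j).natDegree ≤ i :=
  natDegree_sum_le_of_forall_le _ _ fun r _ =>
    (natDegree_C_mul_X_pow_le _ _).trans (Nat.sub_le i r)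

theorem bPoly_zero (hb : BRec b) : bPoly b s i 0 = X ^ i := by
  rw [bPoly, sum_range_succ', sum_eq_zero]
  · simp [bCoeff, hb.1]
  · intro r _
    simp [bCoeff]

theorem bPoly_succ (hb : BRec b) (j : ℕ) :
    bPoly b s i (j + 1) = C ((s : ℝ) + j) * bPoly b s i j - derivative (bPoly b s i j) := by
  simp only [bPoly, derivative_sum, derivative_C_mul_X_pow, mul_sum]
  rw [sum_range_succ', sum_range_succ' (fun r => C _ * (C _ * X ^ _)),
    sum_range_succ (fun r => C (_ * _) * X ^ _)]
  simp only [bCoeff_succ_zero s i hb, bCoeff_succ_succ s i hb, Nat.sub_self, Nat.cast_zero,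
    mul_zero, map_zero, zero_mul, add_zero]
  rw [add_sub_right_comm, ← sum_sub_distrib]
  congr 1
  · refine sum_congr rfl fun r hr => ?_
    rw [Nat.cast_sub (Finset.mem_range.1 hr).le, Nat.sub_sub]
    simp only [map_sub, map_mul, map_add, map_intCast, map_natCast]
    push_cast
    ring
  · simp only [map_add, map_intCast, map_natCast]
    push_cast
    ring

end Recurrence

section Telescoping

variable (b : ℕ → ℕ → ℕ → ℕ → ℤ) (s i : ℕ)

noncomputable def bApprox (J : ℕ) (y : ℝ) : ℝ :=
  ∑ j ∈ range J, y ^ 2 * (bPoly b s i j).eval (log (log y)) / (2 ^ (j + 1) * log y ^ (s + j))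

noncomputable def bRemainder (j : ℕ) (x : ℝ) : ℝ :=
  x * (bPoly b s i j).eval (log (log x)) / (2 ^ j * log x ^ (s + j))

theorem bApprox_eq (J : ℕ) (y : ℝ) :
    bApprox b s i J y = ∑ j ∈ range J, ∑ r ∈ range (min i j + 1),
      (b s i j r : ℝ) * y ^ 2 * log (log y) ^ (i - r) / (2 ^ (j + 1) * log y ^ (s + j)) := by
  refine sum_congr rfl fun j _ => ?_
  have hterm : ∀ r,
      (b s i j r : ℝ) * y ^ 2 * log (log y) ^ (i - r) / (2 ^ (j + 1) * log y ^ (s + j))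
        = b s i j r * (y ^ 2 * log (log y) ^ (i - r) / (2 ^ (j + 1) * log y ^ (s + j))) :=
    fun r => by ring
  simp only [hterm, sum_range_min_eq_sum_bCoeff, bPoly, eval_finsetSum, eval_mul, eval_C,
    eval_pow, eval_X, mul_sum, sum_div]
  exact sum_congr rfl fun r _ => by ring

theorem continuousOn_bRemainder (j : ℕ) : ContinuousOn (bRemainder b s i j) (Ioi 1) := by
  have h : ∀ x ∈ Ioi (1 : ℝ), log x ≠ 0 := fun x hx => (log_pos hx).ne'
  unfold bRemainder
  fun_prop (disch := first | assumption | simp_all | positivity)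

theorem isBigO_bRemainder (j : ℕ) :
    bRemainder b s i j =O[atTop] fun x => x * log (log x) ^ i / log x ^ (s + j) := by
  refine ((isBigO_mul_eval_loglog (natDegree_bPoly_le (b := b) s i j) fun x => x / log x ^ (s + j)
    ).const_mul_left ((2 : ℝ) ^ j)⁻¹).congr (fun x => ?_) fun x => ?_
  · simp only [bRemainder]; ring
  · ring

variable (hb : BRec b)
include hb

theorem bRemainder_zero : bRemainder b s i 0 = fun x => x * log (log x) ^ i / log x ^ s := by
  ext x
  simp [bRemainder, bPoly_zero s i hb]

theorem hasDerivAt_bApprox_term (j : ℕ) {x : ℝ} (hx : 1 < x) :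
    HasDerivAt
      (fun y => y ^ 2 * (bPoly b s i j).eval (log (log y)) / (2 ^ (j + 1) * log y ^ (s + j)))
      (bRemainder b s i j x - bRemainder b s i (j + 1) x) x := by
  have h := (hasDerivAt_sq_mul_eval_loglog_div_log_pow (bPoly b s i j) (s + j) hx).const_mul
    ((2 : ℝ) ^ (j + 1))⁻¹
  refine (h.congr_deriv ?_).congr_of_eventuallyEq (.of_forall fun y => by ring)
  simp only [bRemainder, bPoly_succ s i hb, eval_sub, eval_mul, eval_C]
  push_cast
  field_simp
  ring

theorem hasDerivAt_bApprox (J : ℕ) {x : ℝ} (hx : 1 < x) :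
    HasDerivAt (bApprox b s i J) (x * log (log x) ^ i / log x ^ s - bRemainder b s i J x) x := by
  have h := HasDerivAt.fun_sum (u := range J) fun j _ => hasDerivAt_bApprox_term b s i hb j hx
  rw [sum_range_sub' (fun j => bRemainder b s i j x), bRemainder_zero b s i hb] at h
  exact h

theorem integral_eq_bApprox (J : ℕ) {a n : ℝ} (ha : 1 < a) (hn : 1 < n) :
    ∫ x in a..n, x * log (log x) ^ i / log x ^ s
      = bApprox b s i J n - bApprox b s i J a + ∫ x in a..n, bRemainder b s i J x := by
  have hsub : uIcc a n ⊆ Ioi 1 := ordConnected_Ioi.uIcc_subset ha hn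
  have hR := ((continuousOn_bRemainder b s i J).mono hsub).intervalIntegrable (μ := volume)
  have hf := ((continuousOn_bRemainder b s i 0).mono hsub).intervalIntegrable (μ := volume)
  rw [bRemainder_zero b s i hb] at hf
  rw [← intervalIntegral.integral_eq_sub_of_hasDerivAt
    (fun x hx => hasDerivAt_bApprox b s i hb J (hsub hx)) (hf.sub hR),
    intervalIntegral.integral_sub hf hR]
  ring

end Telescoping

theorem integral_x_loglog_pow_div_log_pow_general (b : ℕ → ℕ → ℕ → ℕ → ℤ) (hb : BRec b)
    (m s i : ℕ) (hsm : s ≤ m) :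
    (fun n : ℝ =>
        (∫ x in (3 : ℝ)..n, x * Real.log (Real.log x) ^ i / Real.log x ^ s) -
          ∑ j ∈ Finset.range (m - s + 1), ∑ r ∈ Finset.range (min i j + 1),
            (b s i j r : ℝ) * n ^ 2 * Real.log (Real.log n) ^ (i - r) /
              (2 ^ (j + 1) * Real.log n ^ (s + j)))
      =O[atTop] fun n : ℝ => n ^ 2 * Real.log (Real.log n) ^ i / Real.log n ^ (m + 1) := by
  simp only [← bApprox_eq]
  have hdecomp : (fun n => (∫ x in (3 : ℝ)..n, bRemainder b s i (m - s + 1) x)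
      - bApprox b s i (m - s + 1) 3) =ᶠ[atTop] fun n =>
        (∫ x in (3 : ℝ)..n, x * log (log x) ^ i / log x ^ s) - bApprox b s i (m - s + 1) n := by
    filter_upwards [eventually_gt_atTop 1] with n hn
    rw [integral_eq_bApprox b s i hb _ (by norm_num) hn]
    ring
  refine (IsBigO.sub ?_ (isBigO_const_of_tendsto_atTop
    (tendsto_sq_mul_loglog_pow_div_log_pow i (m + 1)) _)).congr' hdecomp .rfl
  rw [show m + 1 = s + (m - s + 1) by omega]
  exact isBigO_integral_of_isBigO_mul_loglog_pow (by norm_num)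
    ((continuousOn_bRemainder b s i _).mono (Ici_subset_Ioi.2 (by norm_num)))
    (isBigO_bRemainder b s i _)

/-- For `1 ≤ s ≤ m` and `0 ≤ i ≤ s`, as `n → ∞`:
`∫_3^n x (log log x)^i / log^s x dx
  = ∑_{j=0}^{m-s} ∑_{r=0}^{min(i,j)} b_{s,i,j,r} n² (log log n)^{i-r} / (2^{j+1} log^{s+j} n)
    + O(n² (log log n)^i / log^{m+1} n)`. -/
theorem integral_x_loglog_pow_div_log_pow (b : ℕ → ℕ → ℕ → ℕ → ℤ) (hb : BRec b)
    (m s i : ℕ) (hm : 1 ≤ m) (hs : 1 ≤ s) (hsm : s ≤ m) (hi : i ≤ s) :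
    (fun n : ℝ =>
        (∫ x in (3 : ℝ)..n, x * Real.log (Real.log x) ^ i / Real.log x ^ s) -
          ∑ j ∈ Finset.range (m - s + 1), ∑ r ∈ Finset.range (min i j + 1),
            (b s i j r : ℝ) * n ^ 2 * Real.log (Real.log n) ^ (i - r) /
              (2 ^ (j + 1) * Real.log n ^ (s + j)))
      =O[atTop] fun n : ℝ => n ^ 2 * Real.log (Real.log n) ^ i / Real.log n ^ (m + 1) :=
  integral_x_loglog_pow_div_log_pow_general b hb m s i hsm
end
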